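/- Let L be a vertically indecomposable levellised n-lattice, m ≥ 1, and A_n,…,A_{n+m−1} ⊆ L \ {0} satisfying the conditions making L̃ = L_{A_n,…,A_{n+m−1}} a levellised lattice. Then L̃ is vertically decomposable if and only if m = 1 and ↑A_n = L \ {0}. -/

import Mathlib

namespace PaperLattice

variable {N : ℕ}

/-- Depth: one less than the maximum length of a chain from `t` down to `a` w.r.t. `le`. -/
noncomputable def dep (le : Fin N → Fin N → Prop) (t a : Fin N) : ℕ :=
  sSup {k | ∃ l : List (Fin N), List.Chain' (fun x y => le y x ∧ y ≠ x) l ∧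
    l.head? = some t ∧ l.getLast? = some a ∧ l.length = k + 1}

/-- The `d`-th level: elements of depth `d`. -/
noncomputable def lev (le : Fin N → Fin N → Prop) (t : Fin N) (d : ℕ) : Set (Fin N) :=
  {a | dep le t a = d}

/-- A labelled poset is levellised if depth is monotone in the nonzero labels. -/
def Levellised (le : Fin N → Fin N → Prop) (t : Fin N) : Prop :=
  ∀ i j : Fin N, 0 < (i : ℕ) → (i : ℕ) ≤ (j : ℕ) → dep le t i ≤ dep le t j

def lt' (le : Fin N → Fin N → Prop) (a b : Fin N) : Prop := le a b ∧ a ≠ b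

/-- `b` covers `a`. -/
def CovByRel (le : Fin N → Fin N → Prop) (a b : Fin N) : Prop :=
  lt' le a b ∧ ∀ x, lt' le a x → lt' le x b → False

/-- The covering set of `a`. -/
def cov (le : Fin N → Fin N → Prop) (a : Fin N) : Set (Fin N) := {b | CovByRel le a b}

/-- The up-set of `A`. -/
def upset (le : Fin N → Fin N → Prop) (A : Set (Fin N)) : Set (Fin N) :=
  {x | ∃ a ∈ A, le a x}

def AntichainRel (le : Fin N → Fin N → Prop) (A : Set (Fin N)) : Prop :=
  ∀ a ∈ A, ∀ b ∈ A, a ≠ b → ¬ le a b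

/-- Binary weight of a set of labels. -/
noncomputable def wt (A : Set (Fin N)) : ℕ :=
  ∑ j : Fin N, A.indicator (fun j => 2 ^ (j : ℕ)) j

/-- `z` is a bottom and `o` a top for `le`. -/
def Bounds (le : Fin N → Fin N → Prop) (z o : Fin N) : Prop :=
  (∀ a, le z a) ∧ (∀ a, le a o)

/-- The order obtained from `le` by adding `m` new atoms, the `i`-th having covering set `A i`. -/
def extLe {n m : ℕ} (le : Fin n → Fin n → Prop) (A : Fin m → Set (Fin n)) :
    Fin (n + m) → Fin (n + m) → Prop := fun x y =>
  if hx : (x : ℕ) < n then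
    if hy : (y : ℕ) < n then le ⟨x, hx⟩ ⟨y, hy⟩
    else (x : ℕ) = 0
  else
    if hy : (y : ℕ) < n then
      (⟨y, hy⟩ : Fin n) ∈ upset le (A ⟨(x : ℕ) - n, by have := x.isLt; omega⟩)
    else x = y

/-- The relabelled order `π(L)`. -/
def permLe {n : ℕ} (π : Equiv.Perm (Fin n)) (le : Fin n → Fin n → Prop) :
    Fin n → Fin n → Prop := fun a b => le (π.symm a) (π.symm b)


/-- `A` is a lattice-antichain for `L` (with bottom `z`). -/
def IsLatticeAntichain {n : ℕ} (L : Lattice (Fin n)) (z : Fin n) (A : Set (Fin n)) : Prop :=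
  A.Nonempty ∧ (∀ a ∈ A, a ≠ z) ∧ AntichainRel L.le A ∧
    ∀ a ∈ upset L.le A, ∀ b ∈ upset L.le A,
      L.inf a b = z ∨ L.inf a b ∈ upset L.le A

/-- Vertical decomposability: some element other than the bottom `z` and top `o` is
comparable to every element. -/
def VertDecomp {N : ℕ} (le : Fin N → Fin N → Prop) (z o : Fin N) : Prop :=
  ∃ i : Fin N, i ≠ z ∧ i ≠ o ∧ ∀ j, le i j ∨ le j i

/-! An old element comparable to everything in the extension would already be comparable to
everything in `L`, so a witness of vertical decomposability must be a new atom. Comparability with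
the other new atoms forces it to be the only one, and comparability with the old elements puts
every nonzero element of `L` into its up-set `↑A`; conversely such an atom is comparable to all. -/

section Extension

variable {n m : ℕ} (le : Fin n → Fin n → Prop) (A : Fin m → Set (Fin n))

@[simp]
theorem extLe_castAdd_castAdd (a b : Fin n) :
    extLe le A (Fin.castAdd m a) (Fin.castAdd m b) ↔ le a b := by
  simp [extLe]

@[simp]
theorem extLe_castAdd_natAdd (a : Fin n) (i : Fin m) :
    extLe le A (Fin.castAdd m a) (Fin.natAdd n i) ↔ (a : ℕ) = 0 := by
  simp [extLe]

@[simp]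
theorem extLe_natAdd_castAdd (i : Fin m) (b : Fin n) :
    extLe le A (Fin.natAdd n i) (Fin.castAdd m b) ↔ b ∈ upset le (A i) := by
  simp [extLe]

@[simp]
theorem extLe_natAdd_natAdd (i j : Fin m) :
    extLe le A (Fin.natAdd n i) (Fin.natAdd n j) ↔ i = j := by
  simp [extLe, Fin.ext_iff]

variable {le A}

theorem vertDecomp_of_comparable_castAdd {z o a : Fin n} (hz : a ≠ z) (ho : a ≠ o)
    (h : ∀ y, extLe le A (Fin.castAdd m a) y ∨ extLe le A y (Fin.castAdd m a)) :
    VertDecomp le z o :=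
  ⟨a, hz, ho, fun b => by simpa using h (Fin.castAdd m b)⟩

theorem eq_of_comparable_natAdd {i : Fin m}
    (h : ∀ y, extLe le A (Fin.natAdd n i) y ∨ extLe le A y (Fin.natAdd n i)) (j : Fin m) :
    j = i := by
  simpa [eq_comm] using h (Fin.natAdd n j)

theorem mem_upset_of_comparable_natAdd {i : Fin m}
    (h : ∀ y, extLe le A (Fin.natAdd n i) y ∨ extLe le A y (Fin.natAdd n i)) {b : Fin n}
    (hb : (b : ℕ) ≠ 0) : b ∈ upset le (A i) := by
  simpa [hb] using h (Fin.castAdd m b)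

theorem vertDecomp_extLe_iff {z o : Fin n} (hL : ¬ VertDecomp le z o) :
    VertDecomp (extLe le A) (Fin.castAdd m z) (Fin.castAdd m o) ↔
      m = 1 ∧ ∀ i, ∀ b : Fin n, (b : ℕ) ≠ 0 → b ∈ upset le (A i) := by
  constructor
  · rintro ⟨x, hxz, hxo, hx⟩
    induction x using Fin.addCases with
    | left a =>
      exact absurd (vertDecomp_of_comparable_castAdd (ne_of_apply_ne _ hxz)
        (ne_of_apply_ne _ hxo) hx) hL
    | right i =>
      have hall := eq_of_comparable_natAdd hx
      refine ⟨?_, fun j b hb => hall j ▸ mem_upset_of_comparable_natAdd hx hb⟩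
      simpa using Fintype.card_eq_one_iff.2 ⟨i, hall⟩
  · rintro ⟨rfl, hup⟩
    refine ⟨Fin.natAdd n 0, ?_, ?_, fun y => ?_⟩
    · simpa [Fin.ext_iff] using z.isLt.ne'
    · simpa [Fin.ext_iff] using o.isLt.ne'
    induction y using Fin.addCases with
    | left b =>
      by_cases hb : (b : ℕ) = 0
      · simp [hb]
      · simp [hup 0 b hb]
    | right j => simp [Subsingleton.elim j 0]

end Extension

theorem bot_notMem_upset {n : ℕ} (L : Lattice (Fin n)) {z : Fin n} (hz : ∀ a, L.le z a)
    {S : Set (Fin n)} (hS : z ∉ S) : z ∉ upset L.le S := by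
  rintro ⟨a, ha, haz⟩
  exact hS (L.le_antisymm a z haz (hz a) ▸ ha)

/-- if `L` is vertically indecomposable, the extension is vertically
decomposable iff `m = 1` and `↑A_n = L \ {0}`. -/
theorem statement9 {n m : ℕ} (hn : 2 ≤ n) (L : Lattice (Fin n))
    (hb : Bounds L.le ⟨0, by omega⟩ ⟨1, by omega⟩)
    (A : Fin m → Set (Fin n))
    (hB2 : ∀ i : Fin m, IsLatticeAntichain L ⟨0, by omega⟩ (A i))
    (hvind : ¬ VertDecomp L.le ⟨0, by omega⟩ ⟨1, by omega⟩) :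
    VertDecomp (extLe L.le A) ⟨0, by omega⟩ ⟨1, by omega⟩ ↔
      (m = 1 ∧ ∀ i : Fin m, upset L.le (A i) = {x : Fin n | x ≠ ⟨0, by omega⟩}) := by
  have hbot (i : Fin m) : ⟨0, by omega⟩ ∉ upset L.le (A i) :=
    bot_notMem_upset L hb.1 fun h => (hB2 i).2.1 _ h rfl
  -- `⟨0, _⟩ : Fin (n + m)` is `Fin.castAdd m ⟨0, _⟩` definitionally, and likewise for `1`.
  refine (vertDecomp_extLe_iff (m := m) (A := A) hvind).trans (and_congr_right fun _ => ?_)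
  refine forall_congr' fun i => ⟨fun h => ?_, fun h b hb => ?_⟩
  · ext b
    exact ⟨fun hb h0 => hbot i (h0 ▸ hb), fun hb => h b (Fin.val_ne_iff.2 hb)⟩
  · exact h.symm ▸ Fin.val_ne_iff.1 hb

end PaperLattice
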